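/- arXiv:2204.12449 — 2 statements merged into one kernel-verified Lean document; each statement's English description precedes it below -/
import Mathlib

section
/- Equivalence of the thinning-based and classical compound Poisson INGARCH(1,1) models: let G be a probability distribution on ℕ with finite mean μ > 0, and let τ > 0, κ > 0, 0 ≤ β < 1, η > 0, X_0 ∈ ℕ be fixed. Define the thinning-based process {X_t}_{t≥0} by: E_0 ~ Poisson(η); recursively, given the past, L_t = β ∘ E_t (binomial thinning), A_t = E_t − L_t, C_t = κ ⋆ X_t (Poisson thinning), E_{t+1} = L_t + C_t, and X_{t+1} = ψ *_G (I_{t+1} + A_{t+1}) (G-compounding), where the I_t are i.i.d. Poisson(τ) and all thinnings, compoundings and draws are conditionally independent given the past. Define the classical CP-INGARCH(1,1) process {X'_t}_{t≥0} by: X'_0 = X_0, λ_0 = μ·(τ + (1 − β)η), and for t ≥ 1, given the past, N_t ~ Poisson(λ_t/μ), X'_t = Σ_{i=1}^{N_t} Z_{i,t} with Z_{i,t} i.i.d. ~ G, and λ_t = ν + α X'_{t−1} + β λ_{t−1}, where ν = μ(1 − β)τ and α = μ(1 − β)κ. Then the two processes have the same distribution. -/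
/-!
Given the past observations, `Eₜ` is Poisson with a mean `eₜ` that obeys `eₜ₊₁ = β eₜ + κ Xₜ`.
Binomial thinning splits a `Poisson(e)` count into independent `Poisson(β e)` and
`Poisson((1 - β) e)` counts, and independent Poisson counts add up to a Poisson count. Hence, given
the past, `Lₜ ~ Poisson(β eₜ)` independently of `Xₜ`, and `Iₜ₊₁ + Aₜ₊₁ ~ Poisson(τ + (1 - β) eₜ₊₁)`,
so `Xₜ₊₁` is a `G`-compound Poisson count with mean parameter `λₜ₊₁ / μ`, where
`λₜ = μ (τ + (1 - β) eₜ)` satisfies the classical recursion. Formally, the kernel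
`(x, e) ↦ Poisson(β e)` intertwines the thinning chain on `(Xₜ, Lₜ)` with the chain on
`(Xₜ, eₜ)`, and the latter is a deterministic reparametrization of the classical chain.
-/

open ProbabilityTheory
open scoped NNReal ENNReal

/-- Binomial thinning `β ∘ n`: the number of successes among `n` Bernoulli(β) trials. -/
noncomputable def binThin (b : ℝ≥0∞) (hb : b ≤ 1) (n : ℕ) : PMF ℕ :=
  (PMF.binomial b.toNNReal (by simpa using ENNReal.toNNReal_mono ENNReal.one_ne_top hb) n).map Fin.val

/-- `G`-compounding `ψ *_G n`: the distribution of the sum of `n` i.i.d. draws from `G`. -/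
noncomputable def compG (G : PMF ℕ) : ℕ → PMF ℕ
  | 0 => PMF.pure 0
  | n + 1 => (compG G n).bind fun s => G.map fun z => s + z

/-- One step of the thinning-based CP-INGARCH(1,1) process on the state `(Xₜ, Lₜ)`: draw
`Cₜ = κ ⋆ Xₜ` (i.e. `Cₜ | Xₜ ~ Pois(κ·Xₜ)`), set `Eₜ₊₁ = Lₜ + Cₜ`, draw `Lₜ₊₁ = β ∘ Eₜ₊₁`,
set `Aₜ₊₁ = Eₜ₊₁ - Lₜ₊₁`, draw `Iₜ₊₁ ~ Pois(τ)` and set `Xₜ₊₁ = ψ *_G (Iₜ₊₁ + Aₜ₊₁)`. -/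
noncomputable def cpThinStep (G : PMF ℕ) (τ κ : ℝ≥0) (b : ℝ≥0∞) (hb : b ≤ 1)
    (s : ℕ × ℕ) : PMF (ℕ × ℕ) :=
  (poissonPMF (κ * s.1)).bind fun c =>
    (binThin b hb (s.2 + c)).bind fun l' =>
      (poissonPMF τ).bind fun i' =>
        (compG G (i' + ((s.2 + c) - l'))).map fun x' => (x', l')

/-- Initialization of the thinning-based process: `X₀` fixed, `E₀ ~ Pois(η)`, `L₀ = β ∘ E₀`. -/
noncomputable def cpThinInit (η : ℝ≥0) (b : ℝ≥0∞) (hb : b ≤ 1) (x0 : ℕ) : PMF (ℕ × ℕ) :=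
  (poissonPMF η).bind fun e => (binThin b hb e).map fun l => (x0, l)

/-- Law of the trajectory `(X₀, …, Xₙ)` of the thinning-based CP-INGARCH(1,1) process. -/
noncomputable def cpThinPath (G : PMF ℕ) (τ κ η : ℝ≥0) (b : ℝ≥0∞) (hb : b ≤ 1) (x0 : ℕ) :
    ℕ → PMF (List ℕ × (ℕ × ℕ))
  | 0 => (cpThinInit η b hb x0).map fun s => ([s.1], s)
  | n + 1 => (cpThinPath G τ κ η b hb x0 n).bind fun h =>
      (cpThinStep G τ κ b hb h.2).map fun s' => (h.1 ++ [s'.1], s')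

/-- One step of the classical CP-INGARCH(1,1) process on the state `(X'ₜ, λₜ)`: set
`λₜ₊₁ = ν + α·X'ₜ + β·λₜ`, draw `Nₜ₊₁ ~ Pois(λₜ₊₁/μ)` and `X'ₜ₊₁ = ∑_{i=1}^{Nₜ₊₁} Zᵢ` with
`Zᵢ` i.i.d. `~ G`. -/
noncomputable def cpClassicalStep (G : PMF ℕ) (μ ν α β : ℝ≥0) (s : ℕ × ℝ≥0) :
    PMF (ℕ × ℝ≥0) :=
  (poissonPMF ((ν + α * s.1 + β * s.2) / μ)).bind fun n =>
    (compG G n).map fun x' => (x', ν + α * s.1 + β * s.2)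

/-- Law of the trajectory `(X'₀, …, X'ₙ)` of the classical CP-INGARCH(1,1) process. -/
noncomputable def cpClassicalPath (G : PMF ℕ) (μ ν α β : ℝ≥0) (x0 : ℕ) (lam0 : ℝ≥0) :
    ℕ → PMF (List ℕ × (ℕ × ℝ≥0))
  | 0 => PMF.pure ([x0], (x0, lam0))
  | n + 1 => (cpClassicalPath G μ ν α β x0 lam0 n).bind fun h =>
      (cpClassicalStep G μ ν α β h.2).map fun s' => (h.1 ++ [s'.1], s')

set_option linter.deprecated false

theorem PMF.map_congr_of_mem_support {α β : Type*} {p : PMF α} {f g : α → β}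
    (h : ∀ a ∈ p.support, f a = g a) : p.map f = p.map g := by
  ext b
  simp only [PMF.map_apply]
  refine tsum_congr fun a => ?_
  by_cases ha : a ∈ p.support
  · rw [h a ha]
  · simp [(PMF.apply_eq_zero_iff p a).2 ha]

lemma le_of_mem_support_binThin {b : ℝ≥0∞} {hb : b ≤ 1} {e k : ℕ}
    (hk : k ∈ (binThin b hb e).support) : k ≤ e := by
  obtain ⟨i, -, rfl⟩ := (PMF.mem_support_map_iff _ _ _).1 hk
  exact Nat.lt_succ_iff.1 i.isLt

lemma binThin_add_apply (b : ℝ≥0∞) (hb : b ≤ 1) (l a : ℕ) :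
    binThin b hb (l + a) l = b ^ l * (1 - b) ^ a * (l + a).choose l := by
  have hb' : b ≠ ⊤ := ne_top_of_le_ne_top ENNReal.one_ne_top hb
  rw [binThin, PMF.map_apply, tsum_eq_single (⟨l, by omega⟩ : Fin (l + a + 1))]
  · rw [if_pos rfl]
    erw [PMF.binomial_apply]
    simp [ENNReal.coe_toNNReal hb']
  · intro i hi
    rw [if_neg fun h => hi (Fin.ext h.symm)]

lemma poissonPMF_apply (r : ℝ≥0) (n : ℕ) :
    poissonPMF r n = ENNReal.ofReal (Real.exp (-r) * r ^ n / n.factorial) := rfl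

lemma poisson_mul_binomial_eq_mul_poisson (m g : ℝ) (l a : ℕ) :
    Real.exp (-m) * m ^ (l + a) / (l + a).factorial * (g ^ l * (1 - g) ^ a * (l + a).choose l) =
      Real.exp (-(g * m)) * (g * m) ^ l / l.factorial *
        (Real.exp (-((1 - g) * m)) * ((1 - g) * m) ^ a / a.factorial) := by
  have hexp : Real.exp (-m) = Real.exp (-(g * m)) * Real.exp (-((1 - g) * m)) := by
    rw [← Real.exp_add]; ring_nf
  have hfact : ((l + a).factorial : ℝ) = (l + a).choose l * l.factorial * a.factorial := by
    rw [Nat.choose_symm_add]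
    exact_mod_cast (Nat.add_choose_mul_factorial_mul_factorial l a).symm
  have hchoose : ((l + a).choose l : ℝ) ≠ 0 := Nat.cast_ne_zero.2 (Nat.choose_pos (by omega)).ne'
  rw [hfact, hexp, mul_pow, mul_pow, pow_add]
  field_simp

lemma poissonPMF_mul_binThin (m g : ℝ≥0) (hg : (g : ℝ≥0∞) ≤ 1) (l a : ℕ) :
    poissonPMF m (l + a) * binThin g hg (l + a) l =
      poissonPMF (g * m) l * poissonPMF ((1 - g) * m) a := by
  have hg' : g ≤ 1 := ENNReal.coe_le_one_iff.1 hg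
  have hbin : (g : ℝ≥0∞) ^ l * (1 - g) ^ a * (l + a).choose l =
      ENNReal.ofReal ((g : ℝ) ^ l * (1 - g) ^ a * (l + a).choose l) := by
    have h := ENNReal.ofReal_coe_nnreal (p := g ^ l * (1 - g) ^ a * (l + a).choose l)
    push_cast [ENNReal.coe_sub, NNReal.coe_sub hg'] at h
    exact h.symm
  rw [binThin_add_apply, hbin, poissonPMF_apply, poissonPMF_apply, poissonPMF_apply,
    ← ENNReal.ofReal_mul (by positivity), ← ENNReal.ofReal_mul (by positivity),
    poisson_mul_binomial_eq_mul_poisson]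
  push_cast [NNReal.coe_sub hg']
  rfl

theorem poissonPMF_bind_binThin (m g : ℝ≥0) (hg : (g : ℝ≥0∞) ≤ 1) :
    (poissonPMF m).bind (fun e => (binThin g hg e).map fun l => (l, e - l)) =
      (poissonPMF (g * m)).bind fun l => (poissonPMF ((1 - g) * m)).map fun a => (l, a) := by
  ext ⟨l, a⟩
  have hthin : ∀ e, ((binThin g hg e).map fun k => (k, e - k)) (l, a) =
      if e = l + a then binThin g hg e l else 0 := by
    intro e
    rw [PMF.map_apply, tsum_eq_single l (fun k hk => by simp [Ne.symm hk])]
    by_cases hle : l ≤ e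
    · by_cases he : e = l + a
      · simp [he]
      · simp [he]
        omega
    · rw [(PMF.apply_eq_zero_iff _ _).2 fun h => hle (le_of_mem_support_binThin h)]
      simp
  simp only [PMF.bind_apply, hthin, mul_ite, mul_zero, tsum_ite_eq, PMF.map_apply, Prod.mk.injEq]
  rw [poissonPMF_mul_binThin, tsum_eq_single l fun l' hl' => by simp [Ne.symm hl']]
  simp

theorem poissonPMF_bind_binThin_bind {α : Type*} (m g : ℝ≥0) (hg : (g : ℝ≥0∞) ≤ 1)
    (F : ℕ → ℕ → PMF α) :
    (poissonPMF m).bind (fun e => (binThin g hg e).bind fun l => F l (e - l)) =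
      (poissonPMF (g * m)).bind fun l => (poissonPMF ((1 - g) * m)).bind fun a => F l a := by
  simpa only [PMF.bind_bind, PMF.bind_map, Function.comp_def] using
    congrArg (PMF.bind · fun q => F q.1 q.2) (poissonPMF_bind_binThin m g hg)

/-- Superposition is undone thinning: thin `Poisson(a + c)` with probability `a / (a + c)` and add
the two parts back. -/
theorem poissonPMF_bind_map_add (a c : ℝ≥0) :
    (poissonPMF a).bind (fun i => (poissonPMF c).map (i + ·)) = poissonPMF (a + c) := by
  set g := a / (a + c)
  have hg : g ≤ 1 := div_le_one_of_le₀ le_self_add zero_le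
  have hga : g * (a + c) = a := by
    rcases eq_or_ne (a + c) 0 with h | h
    · simp [g, (add_eq_zero.1 h).1]
    · exact div_mul_cancel₀ a h
  have hgc : (1 - g) * (a + c) = c := by
    rw [tsub_mul, one_mul, hga, add_tsub_cancel_left]
  have hthin := congrArg (PMF.map fun q => q.1 + q.2)
    (poissonPMF_bind_binThin (a + c) g (ENNReal.coe_le_one_iff.2 hg))
  simp only [PMF.map_bind, PMF.map_comp, Function.comp_def, hga, hgc] at hthin
  rw [← hthin]
  conv_rhs => rw [← PMF.bind_pure (poissonPMF (a + c))]
  congr 1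
  funext e
  exact (PMF.map_congr_of_mem_support fun l hl =>
    Nat.add_sub_cancel' (le_of_mem_support_binThin hl)).trans (PMF.map_const _ e)

theorem poissonPMF_bind_bind_add {α : Type*} (a c : ℝ≥0) (F : ℕ → PMF α) :
    (poissonPMF a).bind (fun i => (poissonPMF c).bind fun j => F (i + j)) =
      (poissonPMF (a + c)).bind F := by
  rw [← poissonPMF_bind_map_add, PMF.bind_bind]
  simp only [PMF.bind_map, Function.comp_def]

noncomputable def pathLaw {S α : Type*} (init : PMF S) (step : S → PMF S) (obs : S → α) :
    ℕ → PMF (List α × S)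
  | 0 => init.map fun s => ([obs s], s)
  | n + 1 => (pathLaw init step obs n).bind fun h =>
      (step h.2).map fun s' => (h.1 ++ [obs s'], s')

section Intertwining

variable {S T α : Type*} {initS : PMF S} {stepS : S → PMF S} {obsS : S → α}
  {initT : PMF T} {stepT : T → PMF T} {obsT : T → α}

/-- `Λ t` plays the role of the conditional law of the `S`-state given the `T`-state and the
observations so far. -/
theorem pathLaw_eq_bind_of_intertwining (Λ : T → PMF S)
    (hobs : ∀ t, ∀ s ∈ (Λ t).support, obsS s = obsT t) (hinit : initS = initT.bind Λ)
    (hstep : ∀ t, (Λ t).bind stepS = (stepT t).bind Λ) (n : ℕ) :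
    pathLaw initS stepS obsS n =
      (pathLaw initT stepT obsT n).bind fun h => (Λ h.2).map fun s => (h.1, s) := by
  have hobs_map : ∀ (f : α → List α) t,
      (Λ t).map (fun s => (f (obsS s), s)) = (Λ t).map fun s => (f (obsT t), s) :=
    fun f t => PMF.map_congr_of_mem_support fun s hs => by rw [hobs t s hs]
  induction n with
  | zero =>
    simp only [pathLaw, hinit, PMF.map_bind, PMF.bind_map, Function.comp_def]
    exact congrArg _ (funext (hobs_map (fun a => [a])))
  | succ n ih =>
    simp only [pathLaw, ih, PMF.bind_bind, PMF.bind_map, Function.comp_def]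
    refine congrArg _ (funext fun h => ?_)
    rw [← PMF.map_bind, hstep, PMF.map_bind]
    exact congrArg _ (funext (hobs_map (fun a => h.1 ++ [a])))

theorem pathLaw_map_fst_eq_of_intertwining (Λ : T → PMF S)
    (hobs : ∀ t, ∀ s ∈ (Λ t).support, obsS s = obsT t) (hinit : initS = initT.bind Λ)
    (hstep : ∀ t, (Λ t).bind stepS = (stepT t).bind Λ) (n : ℕ) :
    (pathLaw initS stepS obsS n).map Prod.fst = (pathLaw initT stepT obsT n).map Prod.fst := by
  rw [pathLaw_eq_bind_of_intertwining Λ hobs hinit hstep, PMF.map_bind]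
  simp only [PMF.map_comp, Function.comp_def]
  exact congrArg _ (funext fun h => PMF.map_const _ _)

end Intertwining

theorem cpThinPath_eq_pathLaw (G : PMF ℕ) (τ κ η : ℝ≥0) (b : ℝ≥0∞) (hb : b ≤ 1) (x0 : ℕ)
    (n : ℕ) :
    cpThinPath G τ κ η b hb x0 n =
      pathLaw (cpThinInit η b hb x0) (cpThinStep G τ κ b hb) Prod.fst n := by
  induction n with
  | zero => rfl
  | succ n ih => simp only [cpThinPath, pathLaw, ih]

theorem cpClassicalPath_eq_pathLaw (G : PMF ℕ) (μ ν α β : ℝ≥0) (x0 : ℕ) (lam0 : ℝ≥0) (n : ℕ) :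
    cpClassicalPath G μ ν α β x0 lam0 n =
      pathLaw (PMF.pure (x0, lam0)) (cpClassicalStep G μ ν α β) Prod.fst n := by
  induction n with
  | zero => exact (PMF.pure_map (fun s => ([s.1], s)) (x0, lam0)).symm
  | succ n ih => simp only [cpClassicalPath, pathLaw, ih]

/-- The observations of the thinning model as a chain on `(Xₜ, eₜ)`, where `eₜ` is the conditional
mean of `Eₜ` given `X₀, …, Xₜ₋₁`; the classical intensity is `λₜ = μ (τ + (1 - β) eₜ)`. -/
noncomputable def cpIntensityStep (G : PMF ℕ) (τ κ β : ℝ≥0) (s : ℕ × ℝ≥0) : PMF (ℕ × ℝ≥0) :=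
  (poissonPMF (τ + (1 - β) * (β * s.2 + κ * s.1))).bind fun n =>
    (compG G n).map fun x' => (x', β * s.2 + κ * s.1)

noncomputable def cpThinStateOfIntensity (β : ℝ≥0) (s : ℕ × ℝ≥0) : PMF (ℕ × ℕ) :=
  (poissonPMF (β * s.2)).map fun l => (s.1, l)

theorem cpThinInit_eq_cpThinStateOfIntensity (η β : ℝ≥0) (hβ : (β : ℝ≥0∞) ≤ 1) (x0 : ℕ) :
    cpThinInit η β hβ x0 = cpThinStateOfIntensity β (x0, η) := by
  have h := poissonPMF_bind_binThin_bind η β hβ fun l _ => PMF.pure (x0, l)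
  simp only [PMF.bind_const] at h
  exact h

theorem cpThinStep_intertwining (G : PMF ℕ) (τ κ β : ℝ≥0) (hβ : (β : ℝ≥0∞) ≤ 1)
    (s : ℕ × ℝ≥0) :
    (cpThinStateOfIntensity β s).bind (cpThinStep G τ κ β hβ) =
      (cpIntensityStep G τ κ β s).bind (cpThinStateOfIntensity β) := by
  obtain ⟨x, e⟩ := s
  -- `Lₜ + Cₜ ~ Poisson(e')` with `e' = β e + κ x`; thin it into `Lₜ₊₁` and `Aₜ₊₁`; then
  -- `Iₜ₊₁ + Aₜ₊₁ ~ Poisson(τ + (1 - β) e')`, and `Lₜ₊₁` only remains to be moved past `Xₜ₊₁`.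
  simp only [cpThinStateOfIntensity, cpThinStep, cpIntensityStep, PMF.bind_map, PMF.bind_bind,
    Function.comp_def]
  rw [poissonPMF_bind_bind_add (β * e) (κ * x) fun E => (binThin β hβ E).bind fun l' =>
      (poissonPMF τ).bind fun i => (compG G (i + (E - l'))).map fun x' => (x', l'),
    poissonPMF_bind_binThin_bind _ β hβ fun l' a =>
      (poissonPMF τ).bind fun i => (compG G (i + a)).map fun x' => (x', l')]
  have hsum : ∀ l' : ℕ, ((poissonPMF ((1 - β) * (β * e + κ * x))).bind fun a =>
      (poissonPMF τ).bind fun i => (compG G (i + a)).map fun x' => (x', l')) =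
        (poissonPMF (τ + (1 - β) * (β * e + κ * x))).bind fun n =>
          (compG G n).map fun x' => (x', l') := fun l' => by
    rw [PMF.bind_comm]
    exact poissonPMF_bind_bind_add _ _ fun n => (compG G n).map fun x' => (x', l')
  simp only [hsum]
  rw [PMF.bind_comm]
  exact congrArg _ (funext fun n => PMF.bind_comm _ _ fun l x' => PMF.pure (x', l))

theorem fst_eq_of_mem_support_cpThinStateOfIntensity {β : ℝ≥0} {s : ℕ × ℝ≥0} {t : ℕ × ℕ}
    (ht : t ∈ (cpThinStateOfIntensity β s).support) : t.1 = s.1 := by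
  obtain ⟨l, -, rfl⟩ := (PMF.mem_support_map_iff _ _ _).1 ht
  rfl

theorem cpClassical_intensity_update (μ τ κ β e : ℝ≥0) (x : ℕ) (hβ : β ≤ 1) :
    μ * (1 - β) * τ + μ * (1 - β) * κ * x + β * (μ * (τ + (1 - β) * e)) =
      μ * (τ + (1 - β) * (β * e + κ * x)) := by
  apply NNReal.coe_injective
  push_cast [NNReal.coe_sub hβ]
  ring

theorem cpClassicalStep_intensity_eq_map (G : PMF ℕ) (μ τ κ β : ℝ≥0) (hμ : μ ≠ 0) (hβ : β ≤ 1)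
    (s : ℕ × ℝ≥0) :
    cpClassicalStep G μ (μ * (1 - β) * τ) (μ * (1 - β) * κ) β (s.1, μ * (τ + (1 - β) * s.2)) =
      (cpIntensityStep G τ κ β s).map fun t => (t.1, μ * (τ + (1 - β) * t.2)) := by
  simp only [cpClassicalStep, cpIntensityStep, PMF.map_bind, PMF.map_comp, Function.comp_def]
  rw [cpClassical_intensity_update _ _ _ _ _ _ hβ, mul_div_cancel_left₀ _ hμ]

theorem cpThinPath_map_fst_eq_intensity (G : PMF ℕ) (τ κ η β : ℝ≥0) (hβ : (β : ℝ≥0∞) ≤ 1)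
    (x0 n : ℕ) :
    (cpThinPath G τ κ η β hβ x0 n).map Prod.fst =
      (pathLaw (PMF.pure (x0, η)) (cpIntensityStep G τ κ β) Prod.fst n).map Prod.fst := by
  rw [cpThinPath_eq_pathLaw]
  exact pathLaw_map_fst_eq_of_intertwining (cpThinStateOfIntensity β)
    (fun _ _ => fst_eq_of_mem_support_cpThinStateOfIntensity)
    (by rw [PMF.pure_bind, cpThinInit_eq_cpThinStateOfIntensity])
    (cpThinStep_intertwining G τ κ β hβ) n

theorem cpClassicalPath_map_fst_eq_intensity (G : PMF ℕ) (μ τ κ η β : ℝ≥0) (hμ : μ ≠ 0)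
    (hβ : β ≤ 1) (x0 n : ℕ) :
    (cpClassicalPath G μ (μ * (1 - β) * τ) (μ * (1 - β) * κ) β x0
        (μ * (τ + (1 - β) * η)) n).map Prod.fst =
      (pathLaw (PMF.pure (x0, η)) (cpIntensityStep G τ κ β) Prod.fst n).map Prod.fst := by
  rw [cpClassicalPath_eq_pathLaw]
  refine pathLaw_map_fst_eq_of_intertwining
    (fun s : ℕ × ℝ≥0 => PMF.pure (s.1, μ * (τ + (1 - β) * s.2)))
    (fun t s hs => ?_) (PMF.pure_bind (x0, η) _).symm (fun s => ?_) n
  · rw [(PMF.mem_support_pure_iff _ _).1 hs]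
  · rw [PMF.pure_bind, cpClassicalStep_intensity_eq_map G μ τ κ β hμ hβ s]
    rfl

/-- Equivalence of the thinning-based and classical compound Poisson INGARCH(1,1) models:
if `G` has finite mean `μ > 0` then, with `ν = μ(1-β)τ`, `α = μ(1-β)κ` and
`λ₀ = μ(τ + (1-β)η)`, the laws of the trajectories `(X₀, …, Xₙ)` of the two processes
coincide for every `n`, i.e. the two processes have the same distribution. -/
theorem cp_ingarch11_thinning_equivalence
    (G : PMF ℕ) (μ : ℝ≥0) (hμ : 0 < μ)
    (τ κ η β : ℝ≥0) (hβ : β < 1) (x0 : ℕ) :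
    ∀ n : ℕ,
      (cpThinPath G τ κ η (β : ℝ≥0∞) (by exact_mod_cast hβ.le) x0 n).map Prod.fst =
      (cpClassicalPath G μ (μ * (1 - β) * τ) (μ * (1 - β) * κ) β x0
        (μ * (τ + (1 - β) * η)) n).map Prod.fst := fun n => by
  rw [cpThinPath_map_fst_eq_intensity,
    cpClassicalPath_map_fst_eq_intensity G μ τ κ η β hμ.ne' hβ.le]
end

section
/- Transfer of finite moments to the observed process: let r ≥ 1 be a natural number, let G be a probability distribution on ℕ with finite r-th moment, let τ > 0 and 0 ≤ β < 1. Let E be an ℕ-valued random variable with E[E^r] < ∞, let A = (1 − β) ∘ E (binomial thinning of E with probability 1 − β), let I ~ Poisson(τ) be independent of (E, A), and let X = ψ *_G (I + A) (G-compounding, with the G-draws independent of everything else). Then E[X^r] < ∞. -/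
open ProbabilityTheory
open scoped NNReal ENNReal

/-
`X` is a sum of `I + A` independent `G`-draws. Expanding `(S + Z)^j` binomially shows that a
sum of `n` draws has `j`-th moment at most `(n C)^j` for `j ≤ r`, where `C = 1 + E[Z^r]`, so
`E[X^r] ≤ C^r E[(I + A)^r] ≤ C^r 2^(r-1) (E[I^r] + E[A^r])`. Poisson laws have moments of every
order, and thinning does not increase moments: `E[A^r] ≤ E[E^r]`.
-/

open Finset

namespace PMF

noncomputable def natMoment (p : PMF ℕ) (r : ℕ) : ℝ≥0∞ := ∑' n : ℕ, (n : ℝ≥0∞) ^ r * p n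

theorem natMoment_zero (p : PMF ℕ) : p.natMoment 0 = 1 := by
  simp [natMoment]

theorem natMoment_pure (k r : ℕ) : (PMF.pure k).natMoment r = (k : ℝ≥0∞) ^ r := by
  rw [natMoment, tsum_eq_single k fun n hn => by simp [PMF.pure_apply, hn]]
  simp

theorem natMoment_bind {α : Type*} (p : PMF α) (f : α → PMF ℕ) (r : ℕ) :
    (p.bind f).natMoment r = ∑' a, p a * (f a).natMoment r := by
  simp only [natMoment, PMF.bind_apply, ← ENNReal.tsum_mul_left]
  rw [ENNReal.tsum_comm]
  exact tsum_congr fun a => tsum_congr fun n => by ring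

theorem natMoment_map {α : Type*} (p : PMF α) (g : α → ℕ) (r : ℕ) :
    (p.map g).natMoment r = ∑' a, (g a : ℝ≥0∞) ^ r * p a := by
  simp [PMF.map, natMoment_bind, natMoment_pure, mul_comm]

theorem natMoment_map_le {α : Type*} (p : PMF α) {g : α → ℕ} {e : ℕ} (hg : ∀ a, g a ≤ e)
    (r : ℕ) : (p.map g).natMoment r ≤ (e : ℝ≥0∞) ^ r :=
  calc (p.map g).natMoment r ≤ ∑' a, (e : ℝ≥0∞) ^ r * p a := by
        rw [natMoment_map]
        gcongr with a
        exact_mod_cast hg a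
    _ = (e : ℝ≥0∞) ^ r := by rw [ENNReal.tsum_mul_left, p.tsum_coe, mul_one]

theorem natMoment_bind_le (p : PMF ℕ) (f : ℕ → PMF ℕ) {r : ℕ} {c d : ℝ≥0∞}
    (hf : ∀ a, (f a).natMoment r ≤ c + d * (a : ℝ≥0∞) ^ r) :
    (p.bind f).natMoment r ≤ c + d * p.natMoment r :=
  calc (p.bind f).natMoment r ≤ ∑' a, (c * p a + d * ((a : ℝ≥0∞) ^ r * p a)) := by
        rw [natMoment_bind]
        gcongr with a
        calc p a * (f a).natMoment r ≤ p a * (c + d * (a : ℝ≥0∞) ^ r) := by gcongr; exact hf a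
          _ = c * p a + d * ((a : ℝ≥0∞) ^ r * p a) := by ring
    _ = c + d * p.natMoment r := by
        rw [ENNReal.tsum_add, ENNReal.tsum_mul_left, ENNReal.tsum_mul_left, p.tsum_coe, mul_one,
          natMoment]

theorem natMoment_le_pow_one_add_natMoment (p : PMF ℕ) {j r : ℕ} (hjr : j ≤ r) :
    p.natMoment j ≤ (1 + p.natMoment r) ^ j := by
  rcases j.eq_zero_or_pos with rfl | hj
  · simp [natMoment_zero]
  have hpt (n : ℕ) : (n : ℝ≥0∞) ^ j * p n ≤ 1 * p n + (n : ℝ≥0∞) ^ r * p n := by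
    rw [← add_mul]
    gcongr
    rcases n.eq_zero_or_pos with rfl | hn
    · simp [zero_pow hj.ne']
    · exact le_add_left (pow_le_pow_right₀ (by exact_mod_cast hn) hjr)
  calc p.natMoment j ≤ 1 + p.natMoment r := by
        refine (ENNReal.tsum_le_tsum hpt).trans_eq ?_
        rw [ENNReal.tsum_add, ENNReal.tsum_mul_left, p.tsum_coe, mul_one, natMoment]
    _ ≤ (1 + p.natMoment r) ^ j := le_self_pow₀ le_self_add hj.ne'

theorem natMoment_bind_map_add (p G : PMF ℕ) (j : ℕ) :
    (p.bind fun s => G.map (s + ·)).natMoment j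
      = ∑ i ∈ range (j + 1), j.choose i * G.natMoment (j - i) * p.natMoment i := by
  have hinner (s : ℕ) : (G.map (s + ·)).natMoment j
      = ∑ i ∈ range (j + 1), (s : ℝ≥0∞) ^ i * (j.choose i * G.natMoment (j - i)) := by
    rw [natMoment_map]
    simp only [Nat.cast_add, add_pow, sum_mul]
    rw [Summable.tsum_finsetSum fun _ _ => ENNReal.summable]
    refine sum_congr rfl fun i _ => ?_
    rw [natMoment, ← ENNReal.tsum_mul_left, ← ENNReal.tsum_mul_left]
    exact tsum_congr fun z => by ring
  simp only [natMoment_bind, hinner, mul_sum]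
  rw [Summable.tsum_finsetSum fun _ _ => ENNReal.summable]
  refine sum_congr rfl fun i _ => ?_
  generalize (j.choose i : ℝ≥0∞) * G.natMoment (j - i) = M
  rw [natMoment, ← ENNReal.tsum_mul_left]
  exact tsum_congr fun s => by ring

theorem natMoment_compG_le (G : PMF ℕ) {r : ℕ} {C : ℝ≥0∞}
    (hG : ∀ j ≤ r, G.natMoment j ≤ C ^ j) (n : ℕ) :
    ∀ j ≤ r, (compG G n).natMoment j ≤ ((n : ℝ≥0∞) * C) ^ j := by
  induction n with
  | zero => intro j _; simp [compG, natMoment_pure]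
  | succ n ih =>
    intro j hj
    rw [compG, natMoment_bind_map_add]
    calc ∑ i ∈ range (j + 1), j.choose i * G.natMoment (j - i) * (compG G n).natMoment i
        ≤ ∑ i ∈ range (j + 1), ((n : ℝ≥0∞) * C) ^ i * C ^ (j - i) * j.choose i := by
          refine sum_le_sum fun i hi => ?_
          have hij : i ≤ j := Nat.lt_succ_iff.mp (mem_range.mp hi)
          calc j.choose i * G.natMoment (j - i) * (compG G n).natMoment i
              ≤ j.choose i * C ^ (j - i) * ((n : ℝ≥0∞) * C) ^ i := by
                gcongr
                exacts [hG _ (by omega), ih i (by omega)]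
            _ = ((n : ℝ≥0∞) * C) ^ i * C ^ (j - i) * j.choose i := by ring
      _ = (((n + 1 : ℕ) : ℝ≥0∞) * C) ^ j := by rw [← add_pow]; push_cast; ring

theorem natMoment_compG_le_mul_pow (G : PMF ℕ) (r n : ℕ) :
    (compG G n).natMoment r ≤ (1 + G.natMoment r) ^ r * (n : ℝ≥0∞) ^ r := by
  rw [mul_comm, ← mul_pow]
  exact natMoment_compG_le G (fun j hj => G.natMoment_le_pow_one_add_natMoment hj) n r le_rfl

theorem natMoment_poissonPMF_lt_top (τ : ℝ≥0) (r : ℕ) : (poissonPMF τ).natMoment r < ⊤ := by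
  have hnonneg (n : ℕ) : 0 ≤ (n : ℝ) ^ r * poissonPMFReal τ n :=
    mul_nonneg (by positivity) poissonPMFReal_nonneg
  -- `n ^ r ≤ (2 ^ r) ^ n` dominates the moment series by the exponential series at `2 ^ r τ`.
  have hsummable : Summable fun n : ℕ => (n : ℝ) ^ r * poissonPMFReal τ n := by
    refine .of_nonneg_of_le hnonneg (fun n => ?_)
      ((Real.summable_pow_div_factorial (2 ^ r * τ)).mul_left (Real.exp (-τ)))
    have hpow : (n : ℝ) ^ r ≤ ((2 : ℝ) ^ r) ^ n := by
      rw [← pow_mul, mul_comm, pow_mul]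
      gcongr
      exact_mod_cast n.lt_two_pow_self.le
    calc (n : ℝ) ^ r * poissonPMFReal τ n ≤ ((2 : ℝ) ^ r) ^ n * poissonPMFReal τ n := by
          gcongr; exact poissonPMFReal_nonneg
      _ = Real.exp (-τ) * ((2 ^ r * τ) ^ n / n.factorial) := by
          rw [poissonPMFReal, mul_pow]; ring
  have hterm (n : ℕ) : (n : ℝ≥0∞) ^ r * poissonPMF τ n
      = ENNReal.ofReal ((n : ℝ) ^ r * poissonPMFReal τ n) := by
    rw [ENNReal.ofReal_mul (by positivity), ENNReal.ofReal_pow n.cast_nonneg,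
      ENNReal.ofReal_natCast, poissonPMFReal_ofReal_eq_poissonPMF]
  simp only [natMoment, hterm, ← ENNReal.ofReal_tsum_of_nonneg hnonneg hsummable]
  exact ENNReal.ofReal_lt_top

theorem natMoment_binThin_le (b : ℝ≥0∞) (hb : b ≤ 1) (e r : ℕ) :
    (binThin b hb e).natMoment r ≤ (e : ℝ≥0∞) ^ r :=
  natMoment_map_le _ Fin.is_le r

end PMF

theorem cp_ingarch_moment_transfer_general
    (r : ℕ)
    (G : PMF ℕ) (hGr : ∑' k : ℕ, (k : ℝ≥0∞) ^ r * G k < ⊤)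
    (τ : ℝ≥0) (β : ℝ≥0)
    (pE : PMF ℕ) (hEr : ∑' n : ℕ, (n : ℝ≥0∞) ^ r * pE n < ⊤) :
    ∑' n : ℕ, (n : ℝ≥0∞) ^ r *
      (pE.bind fun e =>
        (binThin (1 - (β : ℝ≥0∞)) tsub_le_self e).bind fun a =>
          (poissonPMF τ).bind fun i => compG G (i + a)) n < ⊤ := by
  set K : ℝ≥0∞ := (1 + G.natMoment r) ^ r * 2 ^ (r - 1)
  set P := (poissonPMF τ).natMoment r
  have hcompG (i a : ℕ) :
      (compG G (i + a)).natMoment r ≤ K * (a : ℝ≥0∞) ^ r + K * (i : ℝ≥0∞) ^ r := by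
    have hsplit : (((i + a) ^ r : ℕ) : ℝ≥0∞) ≤ ((2 ^ (r - 1) * (i ^ r + a ^ r) : ℕ) : ℝ≥0∞) :=
      Nat.cast_le.mpr (add_pow_le i.zero_le a.zero_le r)
    push_cast at hsplit
    calc (compG G (i + a)).natMoment r ≤ (1 + G.natMoment r) ^ r * ((i + a : ℕ) : ℝ≥0∞) ^ r :=
          G.natMoment_compG_le_mul_pow r _
      _ ≤ (1 + G.natMoment r) ^ r * (2 ^ (r - 1) * ((i : ℝ≥0∞) ^ r + (a : ℝ≥0∞) ^ r)) := by
          push_cast; gcongr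
      _ = K * (a : ℝ≥0∞) ^ r + K * (i : ℝ≥0∞) ^ r := by ring
  have hthin (e : ℕ) : ((binThin (1 - (β : ℝ≥0∞)) tsub_le_self e).bind fun a =>
      (poissonPMF τ).bind fun i => compG G (i + a)).natMoment r ≤ K * P + K * (e : ℝ≥0∞) ^ r :=
    calc _ ≤ K * P + K * (binThin (1 - (β : ℝ≥0∞)) tsub_le_self e).natMoment r :=
          PMF.natMoment_bind_le _ _ fun a =>
            (PMF.natMoment_bind_le _ _ (hcompG · a)).trans_eq (add_comm _ _)
      _ ≤ K * P + K * (e : ℝ≥0∞) ^ r := by gcongr; exact PMF.natMoment_binThin_le _ _ e r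
  have hP : P ≠ ⊤ := (PMF.natMoment_poissonPMF_lt_top τ r).ne
  calc _ ≤ K * P + K * pE.natMoment r := PMF.natMoment_bind_le pE _ hthin
    _ < ⊤ := by finiteness [hEr.ne]

/-- Transfer of finite moments to the observed process: if `E` has a finite `r`-th moment
(`r ≥ 1`) and `G` has a finite `r`-th moment, then `X = ψ *_G (I + A)` — where
`A = (1-β) ∘ E` is a binomial thinning of `E` and `I ~ Pois(τ)` is independent of `(E, A)`,
with the `G`-draws independent of everything else — has a finite `r`-th moment. -/
theorem cp_ingarch_moment_transfer
    (r : ℕ) (hr : 1 ≤ r)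
    (G : PMF ℕ) (hGr : ∑' k : ℕ, (k : ℝ≥0∞) ^ r * G k < ⊤)
    (τ : ℝ≥0) (hτ : 0 < τ) (β : ℝ≥0) (hβ : β < 1)
    (pE : PMF ℕ) (hEr : ∑' n : ℕ, (n : ℝ≥0∞) ^ r * pE n < ⊤) :
    ∑' n : ℕ, (n : ℝ≥0∞) ^ r *
      (pE.bind fun e =>
        (binThin (1 - (β : ℝ≥0∞)) tsub_le_self e).bind fun a =>
          (poissonPMF τ).bind fun i => compG G (i + a)) n < ⊤ :=
  cp_ingarch_moment_transfer_general r G hGr τ β pE hEr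
end
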